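/- arXiv:1702.03335 — 3 statements merged into one kernel-verified Lean document; each statement's English description precedes it below -/
import Mathlib

section
/- Let d ≥ 1 and c ≥ 1 be integers and let I = {(j,m) : j ∈ ℕ, 0 ≤ m < c·2^{jd}}. Let 0 < p0 < ∞, τ0 ∈ ℝ, Δτ > 0, and define p1 by 1/p1 = Δτ/d + 1/p0. Then there exists a constant C > 0 such that for every λ : I → ℝ and every integer n ≥ 1, the best n-term approximation error satisfies σ_{n,p0,τ0}(λ) ≤ C·n^{−Δτ/d}·‖λ‖_{b_{p1,p1}^{τ0+Δτ}}. -/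
/-!
With `w(j,m) = 2 ^ (j (τ0 - d/p0)) |λ(j,m)|` and `d/p1 = Δτ + d/p0`, both Besov norms are `ℓ^p`
norms of the same sequence, `‖λ‖_{b^{τ0}_{p0}} = ‖w‖_{p0}` and `‖λ‖_{b^{τ0+Δτ}_{p1}} = ‖w‖_{p1}`,
so the estimate (with `C = 1`) is Stechkin's inequality. Put `s = ‖w‖_{p1} ^ p1 / n`. By Markov's
inequality at most `n` entries satisfy `w ^ p1 ≥ s`; every other entry is at most `s ^ (1/p1)`,
hence has `w ^ p0 ≤ s ^ (p0/p1 - 1) w ^ p1`, and summing shows that what remains has `ℓ^p0` norm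
at most `n ^ (1/p0 - 1/p1) ‖w‖_{p1}`.
-/

open scoped ENNReal

/-- A sequence indexed by the graded index set
`I = {(j, m) : j ∈ ℕ, 0 ≤ m < c·2^(j·d)}`. -/
def GradedSeq (d c : ℕ) : Type := (j : ℕ) → Fin (c * 2 ^ (j * d)) → ℝ

/-- The Besov sequence quasi-norm
`‖λ‖_{b_{p,p}^τ} = (Σ_{j≥0} 2^{j(τ − d/p)p} Σ_{0≤m<c·2^{jd}} |λ(j,m)|^p)^{1/p}`,
an element of `[0,∞]`. -/
noncomputable def besovNorm (d c : ℕ) (p τ : ℝ) (lam : GradedSeq d c) : ℝ≥0∞ :=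
  (∑' j : ℕ, ENNReal.ofReal ((2 : ℝ) ^ ((j : ℝ) * (τ - (d : ℝ) / p) * p)) *
      ∑ m : Fin (c * 2 ^ (j * d)), ENNReal.ofReal (|lam j m| ^ p)) ^ (1 / p)

/-- The sequence obtained from `lam` by setting to zero the entries indexed by the
finite set `F`. -/
noncomputable def zeroOut (d c : ℕ) (lam : GradedSeq d c)
    (F : Finset ((j : ℕ) × Fin (c * 2 ^ (j * d)))) : GradedSeq d c :=
  fun j m => if (⟨j, m⟩ : (j : ℕ) × Fin (c * 2 ^ (j * d))) ∈ F then 0 else lam j m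

/-- The best `n`-term approximation error of `lam` in `b_{p,p}^τ`: the infimum, over all
finite sets `F ⊆ I` of cardinality at most `n`, of the `b_{p,p}^τ` quasi-norm of the
sequence obtained from `lam` by zeroing out the entries indexed by `F`. -/
noncomputable def nTermError (d c : ℕ) (p τ : ℝ) (lam : GradedSeq d c) (n : ℕ) : ℝ≥0∞ :=
  ⨅ (F : Finset ((j : ℕ) × Fin (c * 2 ^ (j * d)))) (_ : F.card ≤ n),
    besovNorm d c p τ (zeroOut d c lam F)

/-- The `(p,τ)`-compressibility
`κ_{p,τ}(λ) = sup{ r ≥ 0 : sup_n (n+1)^r · σ_{n,p,τ}(λ) < ∞ }`, an element of `[0,∞]`. -/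
noncomputable def compressibility (d c : ℕ) (p τ : ℝ) (lam : GradedSeq d c) : ℝ≥0∞ :=
  sSup (ENNReal.ofReal '' {r : ℝ | 0 ≤ r ∧
    (⨆ n : ℕ, ENNReal.ofReal (((n : ℝ) + 1) ^ r) * nTermError d c p τ lam n) < ⊤})

open Finset

namespace ENNReal

theorem rpow_le_rpow_sub_mul_rpow {x t : ℝ≥0∞} {p q : ℝ} (hq : 0 ≤ q) (hqp : q ≤ p)
    (hxt : x ≤ t) : x ^ p ≤ t ^ (p - q) * x ^ q := by
  calc x ^ p = x ^ (p - q) * x ^ q := by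
        rw [← rpow_add_of_nonneg _ _ (sub_nonneg.2 hqp) hq, sub_add_cancel]
    _ ≤ t ^ (p - q) * x ^ q := by gcongr

theorem rpow_sub_mul_mul_rpow_one_div {n s : ℝ≥0∞} (hn0 : n ≠ 0) (hn : n ≠ ⊤) {p q : ℝ}
    (hq : 0 < q) (hqp : q ≤ p) :
    ((s ^ (1 / q)) ^ (p - q) * (n * s)) ^ (1 / p) = n ^ (1 / p - 1 / q) * (n * s) ^ (1 / q) := by
  have hp : 0 < p := hq.trans_le hqp
  have hpq : p / q = 1 / q * (p - q) + 1 := by field_simp; ring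
  calc ((s ^ (1 / q)) ^ (p - q) * (n * s)) ^ (1 / p) = (n * s ^ (p / q)) ^ (1 / p) := by
        rw [← rpow_mul, mul_left_comm, hpq,
          rpow_add_of_nonneg _ _ (by positivity : 0 ≤ 1 / q * (p - q)) zero_le_one, rpow_one]
    _ = n ^ (1 / p - 1 / q) * (n * s) ^ (1 / q) := by
        rw [mul_rpow_of_nonneg _ _ (by positivity), mul_rpow_of_nonneg _ _ (by positivity),
          ← mul_assoc, ← rpow_add _ _ hn0 hn, sub_add_cancel, ← rpow_mul]
        congr 2
        field_simp

theorem exists_card_le_tsum_rpow_ite_le {ι : Type*} [DecidableEq ι] (W : ι → ℝ≥0∞) {p q : ℝ}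
    (hq : 0 < q) (hqp : q ≤ p) {n : ℕ} (hn : n ≠ 0) :
    ∃ F : Finset ι, #F ≤ n ∧ (∑' i, (if i ∈ F then 0 else W i) ^ p) ^ (1 / p) ≤
      (n : ℝ≥0∞) ^ (1 / p - 1 / q) * (∑' i, W i ^ q) ^ (1 / q) := by
  have hp : 0 < p := hq.trans_le hqp
  have hn0 : (n : ℝ≥0∞) ≠ 0 := by exact_mod_cast hn
  set S := ∑' i, W i ^ q with hS_def
  by_cases hS_top : S = ⊤
  · refine ⟨∅, by simp, ?_⟩
    rw [hS_top, top_rpow_of_pos (by positivity),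
      mul_top (rpow_pos (pos_iff_ne_zero.2 hn0) (natCast_ne_top n)).ne']
    exact le_top
  by_cases hS_zero : S = 0
  · have hW : ∀ i, W i = 0 := fun i =>
      (rpow_eq_zero_iff_of_pos hq).1 (ENNReal.tsum_eq_zero.1 hS_zero i)
    refine ⟨∅, by simp, ?_⟩
    simp [hW, zero_rpow_of_pos, hp]
  set s := S / n
  have hS : S = n * s := (ENNReal.mul_div_cancel hn0 (natCast_ne_top n)).symm
  have hs0 : s ≠ 0 := by simp [s, hS_zero]
  have hs_top : s ≠ ⊤ := div_ne_top hS_top hn0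
  obtain ⟨hfin, hcard⟩ := finset_card_const_le_le_of_tsum_le hS_top le_rfl hs0
  refine ⟨hfin.toFinset, ?_, ?_⟩
  · rw [hS, ENNReal.mul_div_cancel_right hs0 hs_top] at hcard
    exact_mod_cast hcard
  have hsmall : ∀ i ∉ hfin.toFinset, W i ≤ s ^ (1 / q) := fun i hi => by
    rw [one_div, le_rpow_inv_iff hq]
    exact (not_le.1 (by simpa using hi)).le
  have htail : ∑' i, (if i ∈ hfin.toFinset then 0 else W i) ^ p ≤
      (s ^ (1 / q)) ^ (p - q) * S := by
    rw [hS_def, ← ENNReal.tsum_mul_left]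
    refine ENNReal.tsum_le_tsum fun i => ?_
    split_ifs with hi
    · simp [zero_rpow_of_pos hp]
    · exact rpow_le_rpow_sub_mul_rpow hq.le hqp (hsmall i hi)
  calc (∑' i, (if i ∈ hfin.toFinset then 0 else W i) ^ p) ^ (1 / p)
      ≤ ((s ^ (1 / q)) ^ (p - q) * S) ^ (1 / p) := by gcongr
    _ = (n : ℝ≥0∞) ^ (1 / p - 1 / q) * S ^ (1 / q) := by
      rw [hS]
      exact rpow_sub_mul_mul_rpow_one_div hn0 (natCast_ne_top n) hq hqp

end ENNReal

noncomputable def weightedAbs (d c : ℕ) (s : ℝ) (lam : GradedSeq d c)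
    (i : (j : ℕ) × Fin (c * 2 ^ (j * d))) : ℝ≥0∞ :=
  ENNReal.ofReal ((2 : ℝ) ^ ((i.1 : ℝ) * s) * |lam i.1 i.2|)

theorem besovNorm_eq_tsum_weightedAbs_rpow (d c : ℕ) {p : ℝ} (hp : 0 < p) (τ : ℝ)
    (lam : GradedSeq d c) :
    besovNorm d c p τ lam =
      (∑' i, weightedAbs d c (τ - d / p) lam i ^ p) ^ (1 / p) := by
  rw [besovNorm, ENNReal.tsum_sigma']
  congr 1
  refine tsum_congr fun j => ?_
  rw [tsum_fintype, Finset.mul_sum]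
  refine Finset.sum_congr rfl fun m _ => ?_
  have h2 : (0 : ℝ) ≤ 2 ^ ((j : ℝ) * (τ - d / p)) := by positivity
  rw [weightedAbs, ENNReal.ofReal_rpow_of_nonneg (by positivity) hp.le,
    Real.mul_rpow h2 (abs_nonneg _), ← Real.rpow_mul zero_le_two,
    ENNReal.ofReal_mul (by positivity)]

theorem weightedAbs_zeroOut (d c : ℕ) (s : ℝ) (lam : GradedSeq d c)
    (F : Finset ((j : ℕ) × Fin (c * 2 ^ (j * d)))) (i : (j : ℕ) × Fin (c * 2 ^ (j * d))) :
    weightedAbs d c s (zeroOut d c lam F) i = if i ∈ F then 0 else weightedAbs d c s lam i := by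
  split_ifs with hi <;> simp [weightedAbs, zeroOut, hi]

theorem nterm_jackson_estimate_general (d c : ℕ) (hd : 1 ≤ d)
    (p0 τ0 Δτ p1 : ℝ) (hp0 : 0 < p0) (hΔτ : 0 < Δτ)
    (hp1 : 1 / p1 = Δτ / (d : ℝ) + 1 / p0) :
    ∃ C : ℝ, 0 < C ∧ ∀ (lam : GradedSeq d c) (n : ℕ), 1 ≤ n →
      nTermError d c p0 τ0 lam n ≤
        ENNReal.ofReal (C * (n : ℝ) ^ (-(Δτ / (d : ℝ)))) *
          besovNorm d c p1 (τ0 + Δτ) lam := by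
  have hd' : (0 : ℝ) < d := by exact_mod_cast hd
  have hp1_pos : 0 < p1 := one_div_pos.1 (by rw [hp1]; positivity)
  have hp1_le : p1 ≤ p0 :=
    (one_div_le_one_div hp0 hp1_pos).1 (by rw [hp1]; linarith [div_pos hΔτ hd'])
  have hexp : 1 / p0 - 1 / p1 = -(Δτ / d) := by rw [hp1]; ring
  have hsmooth : τ0 + Δτ - d / p1 = τ0 - d / p0 := by
    rw [div_eq_mul_one_div (d : ℝ) p1, hp1, mul_add, mul_div_cancel₀ _ hd'.ne']
    ring
  refine ⟨1, one_pos, fun lam n hn => ?_⟩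
  obtain ⟨F, hF, hest⟩ := ENNReal.exists_card_le_tsum_rpow_ite_le
    (weightedAbs d c (τ0 - d / p0) lam) hp1_pos hp1_le (Nat.one_le_iff_ne_zero.1 hn)
  calc nTermError d c p0 τ0 lam n ≤ besovNorm d c p0 τ0 (zeroOut d c lam F) := iInf₂_le F hF
    _ ≤ (n : ℝ≥0∞) ^ (1 / p0 - 1 / p1) *
          (∑' i, weightedAbs d c (τ0 - d / p0) lam i ^ p1) ^ (1 / p1) := by
      simpa only [besovNorm_eq_tsum_weightedAbs_rpow d c hp0, weightedAbs_zeroOut] using hest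
    _ = _ := by
      rw [one_mul, besovNorm_eq_tsum_weightedAbs_rpow d c hp1_pos, hsmooth, hexp,
        ← ENNReal.ofReal_rpow_of_pos (by exact_mod_cast hn), ENNReal.ofReal_natCast]

theorem nterm_jackson_estimate (d c : ℕ) (hd : 1 ≤ d) (hc : 1 ≤ c)
    (p0 τ0 Δτ p1 : ℝ) (hp0 : 0 < p0) (hΔτ : 0 < Δτ)
    (hp1 : 1 / p1 = Δτ / (d : ℝ) + 1 / p0) :
    ∃ C : ℝ, 0 < C ∧ ∀ (lam : GradedSeq d c) (n : ℕ), 1 ≤ n →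
      nTermError d c p0 τ0 lam n ≤
        ENNReal.ofReal (C * (n : ℝ) ^ (-(Δτ / (d : ℝ)))) *
          besovNorm d c p1 (τ0 + Δτ) lam :=
  nterm_jackson_estimate_general d c hd p0 τ0 Δτ p1 hp0 hΔτ hp1
end

section
/- Let d ≥ 1 and c ≥ 1 be integers and let I = {(j,m) : j ∈ ℕ, 0 ≤ m < c·2^{jd}}. Let 0 < p0 < ∞, τ0 ∈ ℝ, Δτ > 0, and define p1 by 1/p1 = Δτ/d + 1/p0. If λ : I → ℝ is such that there exist constants C > 0 and ε > 0 with σ_{n,p0,τ0}(λ) ≤ C·n^{−Δτ/d − ε} for all integers n ≥ 1, then ‖λ‖_{b_{p1,p1}^{τ0+Δτ}} < ∞. -/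
/-!
Put `g (j, m) = 2 ^ (j s) |λ (j, m)|` with `s = τ0 - d / p0 = τ0 + Δτ - d / p1`, so that both
Besov norms are `ℓ^p` norms of `g`, for `p = p0` and `p = p1`. If `2n` entries of `g` exceed `t`,
every `n`-term approximation leaves `n` of them, so `n ^ (1/p0) t ≤ σ_n ≤ C n ^ (-Δτ/d - ε)`.
Hence at most `2n` entries exceed `2C n ^ (-β)`, where `β = 1/p1 + ε`: `g` lies in weak `ℓ^(1/β)`.
Since `β p1 > 1`, summing `g ^ p1` over the dyadic level sets `{g > 2C 2 ^ (-kβ)}` gives a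
geometric series of ratio `2 ^ (1 - β p1) < 1`.
-/

open scoped ENNReal

namespace ENNReal

variable {ι : Type*}

lemma natCast_card_sub_card_mul_le_tsum {g : ι → ℝ≥0∞} (S F : Finset ι) {t : ℝ≥0∞}
    (hS : ∀ i ∈ S, i ∉ F → t ≤ g i) :
    ((S.card - F.card : ℕ) : ℝ≥0∞) * t ≤ ∑' i, g i := by
  classical
  calc ((S.card - F.card : ℕ) : ℝ≥0∞) * t ≤ (S \ F).card • t := by
        rw [nsmul_eq_mul]
        gcongr
        exact Finset.le_card_sdiff F S
    _ ≤ ∑ i ∈ S \ F, g i := Finset.card_nsmul_le_sum _ _ _ fun i hi => by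
        rw [Finset.mem_sdiff] at hi
        exact hS i hi.1 hi.2
    _ ≤ ∑' i, g i := ENNReal.sum_le_tsum _

lemma rpow_le_ite_add_tsum_ite {x : ℝ≥0∞} (hx : x ≠ ⊤) {p C q : ℝ} (hp : 0 < p) (hC : 0 < C)
    (hq₀ : 0 < q) (hq₁ : q < 1) :
    x ^ p ≤ (if ENNReal.ofReal C < x then x ^ p else 0) +
      ∑' k : ℕ, if ENNReal.ofReal (C * q ^ (k + 1)) < x then ENNReal.ofReal (C * q ^ k) ^ p
        else 0 := by
  by_cases hlarge : ENNReal.ofReal C < x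
  · rw [if_pos hlarge]
    exact le_self_add
  rw [if_neg hlarge, zero_add]
  rcases eq_zero_or_pos x with rfl | hpos
  · rw [ENNReal.zero_rpow_of_pos hp]
    exact zero_le
  have hx_le : x.toReal / C ≤ 1 := by
    rw [div_le_one hC]
    exact ENNReal.toReal_le_of_le_ofReal hC.le (not_lt.mp hlarge)
  obtain ⟨k, hk_lt, hk_le⟩ := exists_nat_pow_near_of_lt_one
    (div_pos (ENNReal.toReal_pos hpos.ne' hx) hC) hx_le hq₀ hq₁
  have hshell : ENNReal.ofReal (C * q ^ (k + 1)) < x := by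
    rw [ENNReal.ofReal_lt_iff_lt_toReal (by positivity) hx]
    rwa [lt_div_iff₀' hC] at hk_lt
  have hbound : x ≤ ENNReal.ofReal (C * q ^ k) := by
    rw [ENNReal.le_ofReal_iff_toReal_le hx (by positivity)]
    rwa [div_le_iff₀' hC] at hk_le
  refine (ENNReal.rpow_le_rpow hbound hp.le).trans (le_of_eq_of_le ?_ (ENNReal.le_tsum k))
  exact (if_pos hshell).symm

lemma tsum_natCast_two_pow_mul_rpow_lt_top (K : ℕ) {p C q : ℝ} (hp : 0 < p) (hC : 0 ≤ C)
    (hq : 0 ≤ q) (hq₁ : 2 * q ^ p < 1) :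
    ∑' k : ℕ, ((K * 2 ^ (k + 1) : ℕ) : ℝ≥0∞) * ENNReal.ofReal (C * q ^ k) ^ p < ⊤ := by
  have hterm : ∀ k : ℕ, ((K * 2 ^ (k + 1) : ℕ) : ℝ≥0∞) * ENNReal.ofReal (C * q ^ k) ^ p =
      ENNReal.ofReal (2 * K * C ^ p) * ENNReal.ofReal (2 * q ^ p) ^ k := by
    intro k
    rw [← ENNReal.ofReal_natCast, ENNReal.ofReal_rpow_of_nonneg (by positivity) hp.le,
      ← ENNReal.ofReal_pow (by positivity), ← ENNReal.ofReal_mul (by positivity),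
      ← ENNReal.ofReal_mul (by positivity), Real.mul_rpow hC (by positivity),
      ← Real.rpow_pow_comm hq]
    congr 1
    push_cast
    ring
  simp only [hterm, ENNReal.tsum_mul_left, ENNReal.tsum_geometric]
  exact ENNReal.mul_lt_top ENNReal.ofReal_lt_top
    (ENNReal.inv_lt_top.2 (tsub_pos_iff_lt.2 (ENNReal.ofReal_lt_one.2 hq₁)))

theorem tsum_rpow_lt_top_of_encard_le {g : ι → ℝ≥0∞} (hg : ∀ i, g i ≠ ⊤) {p β C : ℝ} {K : ℕ}
    (hp : 0 < p) (hβp : 1 < β * p) (hC : 0 < C)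
    (hweak : ∀ n : ℕ, 1 ≤ n →
      {i | ENNReal.ofReal (C * (n : ℝ) ^ (-β)) < g i}.encard ≤ (K * n : ℕ)) :
    ∑' i, g i ^ p < ⊤ := by
  set q : ℝ := 2 ^ (-β) with hq
  have hq₀ : 0 < q := by positivity
  have hq₁ : q < 1 := Real.rpow_lt_one_of_one_lt_of_neg _root_.one_lt_two (by nlinarith)
  have hqp : 2 * q ^ p < 1 := by
    rw [hq, ← Real.rpow_mul zero_le_two, ← Real.rpow_one_add' zero_le_two (by nlinarith)]
    exact Real.rpow_lt_one_of_one_lt_of_neg _root_.one_lt_two (by nlinarith)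
  set L : ℕ → Set ι := fun k => {i | ENNReal.ofReal (C * q ^ k) < g i}
  have hL : ∀ k, (L k).encard ≤ (K * 2 ^ k : ℕ) := by
    intro k
    have := hweak (2 ^ k) Nat.one_le_two_pow
    rwa [Nat.cast_pow, Nat.cast_ofNat, ← Real.rpow_pow_comm two_pos.le] at this
  calc ∑' i, g i ^ p
      ≤ ∑' i, ((L 0).indicator (g · ^ p) i +
          ∑' k, (L (k + 1)).indicator (fun _ => ENNReal.ofReal (C * q ^ k) ^ p) i) :=
        ENNReal.tsum_le_tsum fun i => by
          simpa [Set.indicator_apply, L] using rpow_le_ite_add_tsum_ite (hg i) hp hC hq₀ hq₁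
    _ = ∑' i : L 0, g i ^ p + ∑' k, (L (k + 1)).encard * ENNReal.ofReal (C * q ^ k) ^ p := by
        rw [ENNReal.tsum_add, ENNReal.tsum_comm]
        simp only [← tsum_subtype, ENNReal.tsum_set_const]
    _ ≤ ∑' i : L 0, g i ^ p +
          ∑' k : ℕ, ((K * 2 ^ (k + 1) : ℕ) : ℝ≥0∞) * ENNReal.ofReal (C * q ^ k) ^ p := by
        gcongr with k
        exact_mod_cast hL (k + 1)
    _ < ⊤ := by
        refine ENNReal.add_lt_top.2 ⟨?_, tsum_natCast_two_pow_mul_rpow_lt_top K hp hC.le hq₀.le hqp⟩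
        have := (Set.finite_of_encard_le_coe (hL 0)).fintype
        rw [tsum_fintype]
        exact ENNReal.sum_lt_top.2 fun i _ => ENNReal.rpow_lt_top_of_nonneg hp.le (hg i)

end ENNReal

abbrev GradedIndex (d c : ℕ) : Type := (j : ℕ) × Fin (c * 2 ^ (j * d))

noncomputable def scaledAbs (d c : ℕ) (s : ℝ) (lam : GradedSeq d c) :
    GradedIndex d c → ℝ≥0∞ :=
  fun i => ENNReal.ofReal (2 ^ ((i.1 : ℝ) * s) * |lam i.1 i.2|)

section Besov

variable {d c : ℕ}

lemma besovNorm_eq_tsum_scaledAbs {p τ s : ℝ} (hp : 0 < p) (hs : τ - d / p = s)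
    (lam : GradedSeq d c) :
    besovNorm d c p τ lam = (∑' i, scaledAbs d c s lam i ^ p) ^ (1 / p) := by
  rw [besovNorm, ENNReal.tsum_sigma', hs]
  congr 1
  refine tsum_congr fun j => ?_
  rw [tsum_fintype, Finset.mul_sum]
  refine Finset.sum_congr rfl fun m _ => ?_
  have h2 : (0 : ℝ) ≤ 2 ^ ((j : ℝ) * s) := by positivity
  rw [scaledAbs, ENNReal.ofReal_rpow_of_nonneg (by positivity) hp.le,
    Real.mul_rpow h2 (abs_nonneg _), ← Real.rpow_mul zero_le_two,
    ENNReal.ofReal_mul (by positivity)]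

lemma scaledAbs_zeroOut_of_notMem {s : ℝ} {lam : GradedSeq d c} {F : Finset (GradedIndex d c)}
    {i : GradedIndex d c} (hi : i ∉ F) :
    scaledAbs d c s (zeroOut d c lam F) i = scaledAbs d c s lam i := by
  simp only [scaledAbs, zeroOut, if_neg hi]

lemma natCast_sub_rpow_mul_le_nTermError {p τ : ℝ} (hp : 0 < p) (lam : GradedSeq d c) (n : ℕ)
    (S : Finset (GradedIndex d c)) {t : ℝ≥0∞} (hS : ∀ i ∈ S, t ≤ scaledAbs d c (τ - d / p) lam i) :
    ((S.card - n : ℕ) : ℝ≥0∞) ^ (1 / p) * t ≤ nTermError d c p τ lam n := by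
  refine le_iInf₂ fun F hF => ?_
  rw [besovNorm_eq_tsum_scaledAbs hp rfl]
  calc ((S.card - n : ℕ) : ℝ≥0∞) ^ (1 / p) * t
      = (((S.card - n : ℕ) : ℝ≥0∞) * t ^ p) ^ (1 / p) := by
        rw [ENNReal.mul_rpow_of_nonneg _ _ (by positivity), one_div, ENNReal.rpow_rpow_inv hp.ne']
    _ ≤ (((S.card - F.card : ℕ) : ℝ≥0∞) * t ^ p) ^ (1 / p) := by
        gcongr
    _ ≤ (∑' i, scaledAbs d c (τ - d / p) (zeroOut d c lam F) i ^ p) ^ (1 / p) := by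
        gcongr
        refine ENNReal.natCast_card_sub_card_mul_le_tsum S F fun i hi hiF => ?_
        rw [scaledAbs_zeroOut_of_notMem hiF]
        exact ENNReal.rpow_le_rpow (hS i hi) hp.le

lemma encard_lt_scaledAbs_le_of_nTermError_le {p τ C γ : ℝ} (hp : 0 < p) (hC : 0 < C)
    {lam : GradedSeq d c} {n : ℕ} (hn : 1 ≤ n)
    (hσ : nTermError d c p τ lam n ≤ ENNReal.ofReal (C * (n : ℝ) ^ (-γ))) :
    {i | ENNReal.ofReal (2 * C * (n : ℝ) ^ (-(γ + 1 / p))) < scaledAbs d c (τ - d / p) lam i}.encard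
      ≤ (2 * n : ℕ) := by
  by_contra hlarge
  obtain ⟨T, hTsub, hTcard⟩ := Set.exists_subset_encard_eq (not_le.mp hlarge).le
  have hT : T.Finite := Set.finite_of_encard_eq_coe hTcard
  have hcard : hT.toFinset.card = 2 * n := by
    rw [hT.encard_eq_coe_toFinset_card] at hTcard
    exact_mod_cast hTcard
  have hle := (natCast_sub_rpow_mul_le_nTermError hp lam n hT.toFinset fun i hi =>
    (hTsub ((Set.Finite.mem_toFinset hT).mp hi)).le).trans hσ
  have hn₀ : (0 : ℝ) < n := by exact_mod_cast hn
  have hrpow : (n : ℝ) ^ (1 / p) * (n : ℝ) ^ (-(γ + 1 / p)) = (n : ℝ) ^ (-γ) := by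
    rw [← Real.rpow_add hn₀]
    ring_nf
  rw [hcard, show 2 * n - n = n by omega, ← ENNReal.ofReal_natCast,
    ENNReal.ofReal_rpow_of_nonneg hn₀.le (by positivity), ← ENNReal.ofReal_mul (by positivity),
    ENNReal.ofReal_le_ofReal_iff (by positivity)] at hle
  have : 0 < C * (n : ℝ) ^ (-γ) := by positivity
  nlinarith

end Besov

theorem nterm_bernstein_converse_general (d c : ℕ) (hd : 1 ≤ d)
    (p0 τ0 Δτ p1 : ℝ) (hp0 : 0 < p0) (hΔτ : 0 < Δτ)
    (hp1 : 1 / p1 = Δτ / (d : ℝ) + 1 / p0)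
    (lam : GradedSeq d c)
    (h : ∃ C : ℝ, 0 < C ∧ ∃ ε : ℝ, 0 < ε ∧ ∀ n : ℕ, 1 ≤ n →
      nTermError d c p0 τ0 lam n ≤
        ENNReal.ofReal (C * (n : ℝ) ^ (-(Δτ / (d : ℝ)) - ε))) :
    besovNorm d c p1 (τ0 + Δτ) lam < ⊤ := by
  obtain ⟨C, hC, ε, hε, hσ⟩ := h
  have hd₀ : (0 : ℝ) < d := by exact_mod_cast hd
  have hp1₀ : 0 < p1 := one_div_pos.mp (by rw [hp1]; positivity)
  have hs : τ0 + Δτ - d / p1 = τ0 - d / p0 := by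
    rw [div_eq_mul_one_div (d : ℝ) p1, hp1]
    field_simp
    ring
  have hβ : 1 < (Δτ / d + ε + 1 / p0) * p1 := by
    rw [show Δτ / d + ε + 1 / p0 = 1 / p1 + ε by rw [hp1]; ring, add_mul,
      one_div_mul_cancel hp1₀.ne']
    nlinarith
  rw [besovNorm_eq_tsum_scaledAbs hp1₀ hs]
  refine ENNReal.rpow_lt_top_of_nonneg (by positivity) (ENNReal.tsum_rpow_lt_top_of_encard_le
    (K := 2) (fun _ => ENNReal.ofReal_ne_top) hp1₀ hβ (mul_pos two_pos hC) fun n hn => ?_).ne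
  exact encard_lt_scaledAbs_le_of_nTermError_le hp0 hC hn ((hσ n hn).trans_eq (by rw [neg_add']))

theorem nterm_bernstein_converse (d c : ℕ) (hd : 1 ≤ d) (hc : 1 ≤ c)
    (p0 τ0 Δτ p1 : ℝ) (hp0 : 0 < p0) (hΔτ : 0 < Δτ)
    (hp1 : 1 / p1 = Δτ / (d : ℝ) + 1 / p0)
    (lam : GradedSeq d c)
    (h : ∃ C : ℝ, 0 < C ∧ ∃ ε : ℝ, 0 < ε ∧ ∀ n : ℕ, 1 ≤ n →
      nTermError d c p0 τ0 lam n ≤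
        ENNReal.ofReal (C * (n : ℝ) ^ (-(Δτ / (d : ℝ)) - ε))) :
    besovNorm d c p1 (τ0 + Δτ) lam < ⊤ :=
  nterm_bernstein_converse_general d c hd p0 τ0 Δτ p1 hp0 hΔτ hp1 lam h
end

section
/- Let d ≥ 1 and c ≥ 1 be integers and let I = {(j,m) : j ∈ ℕ, 0 ≤ m < c·2^{jd}}. Let 0 < p0 < ∞, τ0 ∈ ℝ, Δτ > 0, define p1 by 1/p1 = Δτ/d + 1/p0, and let λ : I → ℝ satisfy ‖λ‖_{b_{p0,p0}^{τ0}} < ∞. Then: (a) if ‖λ‖_{b_{p1,p1}^{τ0+Δτ}} < ∞, then the compressibility satisfies κ_{p0,τ0}(λ) ≥ Δτ/d; and (b) if ‖λ‖_{b_{p1,p1}^{τ0+Δτ}} = ∞, then κ_{p0,τ0}(λ) ≤ Δτ/d. -/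
open scoped ENNReal

/-!
Weighting the coefficient `λ(j,m)` by `2^{j(τ₀ - d/p₀)}` gives one family `g` whose `ℓ^{p₀}` norm
is the `b_{p₀,p₀}^{τ₀}` norm and, because `d/p₁ - d/p₀ = Δτ`, whose `ℓ^{p₁}` norm is the
`b_{p₁,p₁}^{τ₀+Δτ}` norm; the best `n`-term error `σ_n` is the `ℓ^{p₀}` norm of `g` with its `n`
largest entries removed. Let `ρ = 1/p₁ - 1/p₀ = Δτ/d`.

(a) Stechkin: at most `n` entries exceed the level `t` with `n t^{p₁} = ‖g‖_{p₁}^{p₁}`, and the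
remaining ones satisfy `g^{p₀} ≤ t^{p₀-p₁} g^{p₁}`, so `n^ρ σ_n ≤ ‖g‖_{p₁}`.

(b) If `(n+1)^r σ_n ≤ C` with `r > ρ`, then `#{g ≥ t} · t^q ≤ 2 C^q` where `1/q = r + 1/p₀ > 1/p₁`,
since removing half of those entries leaves an error of at least `(#{g ≥ t}/2)^{1/p₀} t`.
Summing this weak-`ℓ^q` bound over the dyadic layers of `g` shows `‖g‖_{p₁} < ∞`.
-/

namespace ENNReal

theorem mul_rpow_rpow_one_div {p : ℝ} (hp : 0 < p) (a t : ℝ≥0∞) :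
    (a * t ^ p) ^ (1 / p) = a ^ (1 / p) * t := by
  rw [mul_rpow_of_nonneg _ _ (by positivity), ← rpow_mul, mul_one_div_cancel hp.ne', rpow_one]

theorem ofReal_natCast_add_one_rpow (n : ℕ) (r : ℝ) :
    ENNReal.ofReal (((n : ℝ) + 1) ^ r) = ((n : ℝ≥0∞) + 1) ^ r := by
  rw [← ofReal_rpow_of_pos (by positivity)]
  norm_cast

theorem rpow_le_tsum_dyadic {p : ℝ} (hp : 0 < p) {a M : ℝ≥0∞} (haM : a ≤ M) (hM : M ≠ ⊤) :
    a ^ p ≤ ∑' k : ℕ, if M * 2⁻¹ ^ (k + 1) ≤ a then (2 * (M * 2⁻¹ ^ (k + 1))) ^ p else 0 := by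
  rcases eq_or_ne a 0 with rfl | ha
  · simp [zero_rpow_of_pos hp]
  have hex : ∃ k : ℕ, M * 2⁻¹ ^ (k + 1) ≤ a := by
    obtain ⟨k, hk⟩ := exists_inv_two_pow_lt (a := a / M) (by simp [div_eq_zero_iff, ha, hM])
    refine ⟨k, le_trans ?_ (mul_le_of_le_div' hk.le)⟩
    exact mul_le_mul_right (pow_le_pow_of_le_one zero_le (by norm_num) k.le_succ) M
  set k := Nat.find hex
  have hak : a ≤ 2 * (M * 2⁻¹ ^ (k + 1)) := by
    have h2 : (2 : ℝ≥0∞) * 2⁻¹ ^ (k + 1) = 2⁻¹ ^ k := by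
      rw [pow_succ, mul_left_comm, ENNReal.mul_inv_cancel two_ne_zero ofNat_ne_top, mul_one]
    rw [mul_left_comm, h2]
    rcases hk : k with _ | j
    · simpa using haM
    · exact (not_le.1 (Nat.find_min hex (hk ▸ j.lt_succ_self : j < k))).le
  calc a ^ p ≤ (2 * (M * 2⁻¹ ^ (k + 1))) ^ p := rpow_le_rpow hak hp.le
    _ = if M * 2⁻¹ ^ (k + 1) ≤ a then (2 * (M * 2⁻¹ ^ (k + 1))) ^ p else 0 :=
        (if_pos (Nat.find_spec hex)).symm
    _ ≤ _ := ENNReal.le_tsum k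

theorem tsum_mul_inv_two_pow_succ_rpow_ne_top {M : ℝ≥0∞} (hM : M ≠ ⊤) {s : ℝ} (hs : 0 < s) :
    ∑' k : ℕ, (M * 2⁻¹ ^ (k + 1)) ^ s ≠ ⊤ := by
  have hq : (2⁻¹ : ℝ≥0∞) ^ s < 1 := rpow_lt_one (by norm_num) hs
  simp_rw [mul_rpow_of_nonneg _ _ hs.le, ← rpow_natCast_mul, mul_comm _ s, rpow_mul_natCast,
    ENNReal.tsum_mul_left, tsum_geometric_add_one]
  exact mul_ne_top (rpow_ne_top_of_nonneg hs.le hM)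
    (mul_ne_top (rpow_ne_top_of_nonneg hs.le (by norm_num)) (inv_ne_top.2 (tsub_pos_of_lt hq).ne'))

end ENNReal

open ENNReal

section BestNTermApproximation

variable {ι : Type*}

theorem card_mul_rpow_le_tsum_rpow {p : ℝ} (hp : 0 ≤ p) {g : ι → ℝ≥0∞} {t : ℝ≥0∞}
    {s : Finset ι} (hs : ∀ i ∈ s, t ≤ g i) : (s.card : ℝ≥0∞) * t ^ p ≤ ∑' i, g i ^ p :=
  calc (s.card : ℝ≥0∞) * t ^ p = ∑ _i ∈ s, t ^ p := by rw [Finset.sum_const, nsmul_eq_mul]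
    _ ≤ ∑ i ∈ s, g i ^ p := Finset.sum_le_sum fun i hi => rpow_le_rpow (hs i hi) hp
    _ ≤ ∑' i, g i ^ p := ENNReal.sum_le_tsum s

theorem tsum_rpow_le_rpow_sub_mul_tsum_rpow {p q : ℝ} (hq : 0 ≤ q) (hqp : q ≤ p)
    {g : ι → ℝ≥0∞} {t : ℝ≥0∞} (hg : ∀ i, g i ≤ t) :
    ∑' i, g i ^ p ≤ t ^ (p - q) * ∑' i, g i ^ q := by
  rw [← ENNReal.tsum_mul_left]
  refine ENNReal.tsum_le_tsum fun i => ?_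
  calc g i ^ p = g i ^ (p - q) * g i ^ q := by
        rw [← rpow_add_of_nonneg _ _ (sub_nonneg.2 hqp) hq, sub_add_cancel]
    _ ≤ t ^ (p - q) * g i ^ q := by gcongr; exact hg i

variable [DecidableEq ι]

noncomputable def bestNTermError (p : ℝ) (g : ι → ℝ≥0∞) (n : ℕ) : ℝ≥0∞ :=
  ⨅ (F : Finset ι) (_ : F.card ≤ n), (∑' i, (if i ∈ F then 0 else g i) ^ p) ^ (1 / p)

theorem bestNTermError_le (p : ℝ) (g : ι → ℝ≥0∞) (n : ℕ) :
    bestNTermError p g n ≤ (∑' i, g i ^ p) ^ (1 / p) :=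
  (iInf₂_le ∅ (by simp)).trans_eq (by simp)

theorem natCast_rpow_mul_bestNTermError_le {p₀ p₁ : ℝ} (hp₁ : 0 < p₁) (hp : p₁ ≤ p₀)
    {g : ι → ℝ≥0∞} (hg : ∑' i, g i ^ p₁ ≠ ⊤) {n : ℕ} (hn : n ≠ 0) :
    (n : ℝ≥0∞) ^ (1 / p₁ - 1 / p₀) * bestNTermError p₀ g n ≤ (∑' i, g i ^ p₁) ^ (1 / p₁) := by
  have hp₀ : 0 < p₀ := hp₁.trans_le hp
  set A := ∑' i, g i ^ p₁
  by_cases hA : A = 0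
  · have hg0 : ∀ i, g i = 0 := fun i => by
      simpa [hp₁, hp₁.not_gt] using ENNReal.tsum_eq_zero.1 hA i
    have hσ : bestNTermError p₀ g n = 0 :=
      le_antisymm ((bestNTermError_le p₀ g n).trans_eq (by simp [hg0, hp₀])) zero_le
    simp [hσ]
  have hn₀ : (n : ℝ≥0∞) ≠ 0 := Nat.cast_ne_zero.2 hn
  set t := (A / n) ^ (1 / p₁)
  have ht : (n : ℝ≥0∞) * t ^ p₁ = A := by
    rw [← rpow_mul, one_div_mul_cancel hp₁.ne', rpow_one,
      ENNReal.mul_div_cancel hn₀ (natCast_ne_top n)]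
  have ht₀ : t ≠ 0 := by
    rintro h
    simp [h, zero_rpow_of_pos hp₁] at ht
    exact hA ht.symm
  have htp : t ^ p₁ ≠ 0 := by simp [rpow_eq_zero_iff, ht₀, hp₁.not_gt]
  have htp' : t ^ p₁ ≠ ⊤ := by
    intro h
    simp [h, hn₀] at ht
    exact hg ht.symm
  have hfin : {i | t ≤ g i}.Finite := by
    refine (finite_const_le_of_tsum_ne_top hg htp).subset fun i hi => ?_
    exact rpow_le_rpow hi hp₁.le
  set F := hfin.toFinset
  have hcard : F.card ≤ n := by
    have : (F.card : ℝ≥0∞) * t ^ p₁ ≤ n * t ^ p₁ :=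
      ht ▸ card_mul_rpow_le_tsum_rpow hp₁.le fun i hi => by simpa [F] using hi
    exact_mod_cast (ENNReal.mul_le_mul_iff_left htp htp').1 this
  have htail : ∑' i, (if i ∈ F then 0 else g i) ^ p₀ ≤ n * t ^ p₀ := by
    calc ∑' i, (if i ∈ F then 0 else g i) ^ p₀
        ≤ t ^ (p₀ - p₁) * ∑' i, (if i ∈ F then 0 else g i) ^ p₁ := by
          refine tsum_rpow_le_rpow_sub_mul_tsum_rpow hp₁.le hp fun i => ?_
          split_ifs with hi
          · exact zero_le
          · exact (by simpa [F] using hi : g i < t).le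
      _ ≤ t ^ (p₀ - p₁) * (n * t ^ p₁) := by
          rw [ht]
          gcongr
          refine ENNReal.tsum_le_tsum fun i => ?_
          split_ifs <;> simp [zero_rpow_of_pos hp₁]
      _ = n * t ^ p₀ := by
          rw [mul_left_comm, ← rpow_add_of_nonneg _ _ (sub_nonneg.2 hp) hp₁.le, sub_add_cancel]
  calc (n : ℝ≥0∞) ^ (1 / p₁ - 1 / p₀) * bestNTermError p₀ g n
      ≤ (n : ℝ≥0∞) ^ (1 / p₁ - 1 / p₀) * (n ^ (1 / p₀) * t) := by
        rw [← mul_rpow_rpow_one_div hp₀]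
        gcongr
        exact (iInf₂_le F hcard).trans (by gcongr)
    _ = A ^ (1 / p₁) := by
        rw [← ht, mul_rpow_rpow_one_div hp₁, ← mul_assoc, ← rpow_add _ _ hn₀ (natCast_ne_top n),
          sub_add_cancel]

theorem iSup_rpow_mul_bestNTermError_lt_top {p₀ p₁ : ℝ} (hp₁ : 0 < p₁) (hp : p₁ ≤ p₀)
    {g : ι → ℝ≥0∞} (h₀ : ∑' i, g i ^ p₀ ≠ ⊤) (h₁ : ∑' i, g i ^ p₁ ≠ ⊤) :
    ⨆ n : ℕ, ENNReal.ofReal (((n : ℝ) + 1) ^ (1 / p₁ - 1 / p₀)) * bestNTermError p₀ g n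
      < ⊤ := by
  have hp₀ : 0 < p₀ := hp₁.trans_le hp
  set ρ := 1 / p₁ - 1 / p₀
  have hρ : 0 ≤ ρ := sub_nonneg.2 (one_div_le_one_div_of_le hp₁ hp)
  refine lt_of_le_of_lt (b := (∑' i, g i ^ p₀) ^ (1 / p₀) + 2 ^ ρ * (∑' i, g i ^ p₁) ^ (1 / p₁))
    (iSup_le fun n => ?_) ?_
  · rw [ofReal_natCast_add_one_rpow]
    rcases Nat.eq_zero_or_pos n with rfl | hn
    · simpa using (bestNTermError_le p₀ g 0).trans le_self_add
    have h2n : ((n : ℝ≥0∞) + 1) ^ ρ ≤ 2 ^ ρ * (n : ℝ≥0∞) ^ ρ := by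
      rw [← mul_rpow_of_nonneg _ _ hρ, two_mul]
      gcongr
      exact_mod_cast hn
    calc ((n : ℝ≥0∞) + 1) ^ ρ * bestNTermError p₀ g n
        ≤ 2 ^ ρ * ((n : ℝ≥0∞) ^ ρ * bestNTermError p₀ g n) := by
          rw [← mul_assoc]; gcongr
      _ ≤ 2 ^ ρ * (∑' i, g i ^ p₁) ^ (1 / p₁) := by
          gcongr; exact natCast_rpow_mul_bestNTermError_le hp₁ hp h₁ hn.ne'
      _ ≤ _ := le_add_self
  · exact add_lt_top.2 ⟨rpow_lt_top_of_nonneg (by positivity) h₀,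
      mul_lt_top (rpow_lt_top_of_nonneg hρ ofNat_ne_top) (rpow_lt_top_of_nonneg (by positivity) h₁)⟩

theorem card_sub_rpow_mul_le_bestNTermError {p : ℝ} (hp : 0 < p) {g : ι → ℝ≥0∞}
    {t : ℝ≥0∞} {s : Finset ι} (hs : ∀ i ∈ s, t ≤ g i) (n : ℕ) :
    ((s.card - n : ℕ) : ℝ≥0∞) ^ (1 / p) * t ≤ bestNTermError p g n := by
  refine le_iInf₂ fun F hF => ?_
  rw [← mul_rpow_rpow_one_div hp]
  gcongr
  calc ((s.card - n : ℕ) : ℝ≥0∞) * t ^ p ≤ (s \ F).card * t ^ p := by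
        gcongr
        exact (Nat.sub_le_sub_left hF _).trans (Finset.le_card_sdiff F s)
    _ ≤ ∑' i, (if i ∈ F then 0 else g i) ^ p := by
        refine card_mul_rpow_le_tsum_rpow hp.le fun i hi => ?_
        rw [Finset.mem_sdiff] at hi
        simpa [hi.2] using hs i hi.1

theorem card_mul_rpow_le_of_bestNTermError_le {p r : ℝ} (hp : 0 < p) (hr : 0 ≤ r)
    {g : ι → ℝ≥0∞} {C : ℝ≥0∞}
    (hC : ∀ n : ℕ, ((n : ℝ≥0∞) + 1) ^ r * bestNTermError p g n ≤ C)
    {t : ℝ≥0∞} {s : Finset ι} (hs : ∀ i ∈ s, t ≤ g i) :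
    (s.card : ℝ≥0∞) * t ^ (r + 1 / p)⁻¹ ≤ 2 * C ^ (r + 1 / p)⁻¹ := by
  set e := r + 1 / p
  have he : 0 < e := by positivity
  -- whichever `n = ⌊#s / 2⌋` entries are removed, `m = ⌈#s / 2⌉` entries of `s` remain
  set n := s.card / 2
  set m := s.card - n
  have hmn : (m : ℝ≥0∞) ≤ n + 1 := by exact_mod_cast (by omega : m ≤ n + 1)
  have hsm : (s.card : ℝ≥0∞) ≤ 2 * m := by exact_mod_cast (by omega : s.card ≤ 2 * m)
  have hkey : (m : ℝ≥0∞) ^ e * t ≤ C :=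
    calc (m : ℝ≥0∞) ^ e * t = m ^ r * (m ^ (1 / p) * t) := by
          rw [rpow_add_of_nonneg _ _ hr (by positivity), mul_assoc]
      _ ≤ ((n : ℝ≥0∞) + 1) ^ r * bestNTermError p g n := by
          gcongr
          exact card_sub_rpow_mul_le_bestNTermError hp hs n
      _ ≤ C := hC n
  calc (s.card : ℝ≥0∞) * t ^ e⁻¹ ≤ 2 * ((m : ℝ≥0∞) ^ e * t) ^ e⁻¹ := by
        rw [mul_rpow_of_nonneg _ _ (inv_nonneg.2 he.le), rpow_rpow_inv he.ne', ← mul_assoc]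
        gcongr
    _ ≤ 2 * C ^ e⁻¹ := by gcongr

theorem tsum_ite_mul_rpow_le_of_bestNTermError_le {p r : ℝ} (hp : 0 < p) (hr : 0 ≤ r)
    {g : ι → ℝ≥0∞} {C : ℝ≥0∞}
    (hC : ∀ n : ℕ, ((n : ℝ≥0∞) + 1) ^ r * bestNTermError p g n ≤ C) (t : ℝ≥0∞) :
    (∑' i, if t ≤ g i then (1 : ℝ≥0∞) else 0) * t ^ (r + 1 / p)⁻¹ ≤ 2 * C ^ (r + 1 / p)⁻¹ := by
  rw [← ENNReal.tsum_mul_right]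
  refine ENNReal.summable.tsum_le_of_sum_le fun u => ?_
  rw [← Finset.sum_mul, Finset.sum_boole]
  exact card_mul_rpow_le_of_bestNTermError_le hp hr hC fun i hi => (Finset.mem_filter.1 hi).2

theorem tsum_rpow_ne_top_of_iSup_rpow_mul_bestNTermError_ne_top {p₀ p₁ r : ℝ} (hp₀ : 0 < p₀)
    (hp₁ : 0 < p₁) (hr₀ : 0 ≤ r) (hr : 1 / p₁ - 1 / p₀ < r) {g : ι → ℝ≥0∞}
    (h₀ : ∑' i, g i ^ p₀ ≠ ⊤)
    (hC : ⨆ n : ℕ, ENNReal.ofReal (((n : ℝ) + 1) ^ r) * bestNTermError p₀ g n ≠ ⊤) :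
    ∑' i, g i ^ p₁ ≠ ⊤ := by
  set C := ⨆ n : ℕ, ENNReal.ofReal (((n : ℝ) + 1) ^ r) * bestNTermError p₀ g n
  have hCn : ∀ n : ℕ, ((n : ℝ≥0∞) + 1) ^ r * bestNTermError p₀ g n ≤ C := fun n => by
    rw [← ofReal_natCast_add_one_rpow]
    exact le_iSup (fun n : ℕ => ENNReal.ofReal (((n : ℝ) + 1) ^ r) * bestNTermError p₀ g n) n
  set q := (r + 1 / p₀)⁻¹
  have hq : 0 < q := by positivity
  have hqp : q < p₁ :=
    calc q < (1 / p₁)⁻¹ := inv_strictAnti₀ (one_div_pos.2 hp₁) (by linarith)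
      _ = p₁ := by rw [one_div, inv_inv]
  set M := (∑' i, g i ^ p₀) ^ (1 / p₀)
  have hM : M ≠ ⊤ := rpow_ne_top_of_nonneg (by positivity) h₀
  have hgM : ∀ i, g i ≤ M := fun i => by
    have := rpow_le_rpow (ENNReal.le_tsum (f := fun i => g i ^ p₀) i) (one_div_pos.2 hp₀).le
    rwa [← rpow_mul, mul_one_div_cancel hp₀.ne', rpow_one] at this
  set t : ℕ → ℝ≥0∞ := fun k => M * 2⁻¹ ^ (k + 1)
  have hlayer : ∀ k, (∑' i, if t k ≤ g i then (1 : ℝ≥0∞) else 0) * (2 * t k) ^ p₁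
      ≤ 2 ^ p₁ * (2 * C ^ q) * t k ^ (p₁ - q) := fun k =>
    calc (∑' i, if t k ≤ g i then (1 : ℝ≥0∞) else 0) * (2 * t k) ^ p₁
        = 2 ^ p₁ * ((∑' i, if t k ≤ g i then (1 : ℝ≥0∞) else 0) * t k ^ q) * t k ^ (p₁ - q) := by
          have hsplit : t k ^ p₁ = t k ^ q * t k ^ (p₁ - q) := by
            rw [← rpow_add_of_nonneg _ _ hq.le (sub_nonneg.2 hqp.le), add_sub_cancel]
          rw [mul_rpow_of_nonneg _ _ hp₁.le, hsplit]
          ring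
      _ ≤ 2 ^ p₁ * (2 * C ^ q) * t k ^ (p₁ - q) := by
          gcongr 2 ^ p₁ * ?_ * _
          exact tsum_ite_mul_rpow_le_of_bestNTermError_le hp₀ hr₀ hCn (t k)
  refine ne_top_of_le_ne_top ?_ <| calc
    ∑' i, g i ^ p₁ ≤ ∑' i, ∑' k, if t k ≤ g i then (2 * t k) ^ p₁ else 0 :=
        ENNReal.tsum_le_tsum fun i => rpow_le_tsum_dyadic hp₁ (hgM i) hM
    _ = ∑' k, (∑' i, if t k ≤ g i then (1 : ℝ≥0∞) else 0) * (2 * t k) ^ p₁ := by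
        rw [ENNReal.tsum_comm]
        simp_rw [← ENNReal.tsum_mul_right, ite_mul, one_mul, zero_mul]
    _ ≤ ∑' k, 2 ^ p₁ * (2 * C ^ q) * t k ^ (p₁ - q) := ENNReal.tsum_le_tsum hlayer
    _ = 2 ^ p₁ * (2 * C ^ q) * ∑' k, t k ^ (p₁ - q) := ENNReal.tsum_mul_left
  exact mul_ne_top (mul_ne_top (rpow_ne_top_of_nonneg hp₁.le ofNat_ne_top)
    (mul_ne_top ofNat_ne_top (rpow_ne_top_of_nonneg hq.le hC)))
    (tsum_mul_inv_two_pow_succ_rpow_ne_top hM (sub_pos.2 hqp))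

end BestNTermApproximation

section GradedSeq

variable {d c : ℕ}

noncomputable def besovCoeff (s : ℝ) (lam : GradedSeq d c) :
    (j : ℕ) × Fin (c * 2 ^ (j * d)) → ℝ≥0∞ :=
  fun i => ENNReal.ofReal ((2 : ℝ) ^ ((i.1 : ℝ) * s) * |lam i.1 i.2|)

theorem besovNorm_eq_tsum_besovCoeff {p : ℝ} (hp : 0 < p) (τ : ℝ) (lam : GradedSeq d c) :
    besovNorm d c p τ lam = (∑' i, besovCoeff (τ - d / p) lam i ^ p) ^ (1 / p) := by
  rw [besovNorm, ENNReal.tsum_sigma']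
  congr 1
  refine tsum_congr fun j => ?_
  rw [tsum_fintype, Finset.mul_sum]
  refine Finset.sum_congr rfl fun m _ => ?_
  rw [besovCoeff, ENNReal.ofReal_rpow_of_nonneg (by positivity) hp.le,
    Real.mul_rpow (by positivity) (abs_nonneg _), ← Real.rpow_mul zero_le_two,
    ENNReal.ofReal_mul (by positivity)]

theorem besovCoeff_zeroOut (s : ℝ) (lam : GradedSeq d c)
    (F : Finset ((j : ℕ) × Fin (c * 2 ^ (j * d)))) (i : (j : ℕ) × Fin (c * 2 ^ (j * d))) :
    besovCoeff s (zeroOut d c lam F) i = if i ∈ F then 0 else besovCoeff s lam i := by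
  split_ifs with hi <;> simp [besovCoeff, zeroOut, hi]

theorem nTermError_eq_bestNTermError {p : ℝ} (hp : 0 < p) (τ : ℝ) (lam : GradedSeq d c)
    (n : ℕ) : nTermError d c p τ lam n = bestNTermError p (besovCoeff (τ - d / p) lam) n := by
  refine iInf_congr fun F => iInf_congr fun _ => ?_
  simp_rw [besovNorm_eq_tsum_besovCoeff hp, besovCoeff_zeroOut]

end GradedSeq

theorem compressibility_bounds_general (d c : ℕ) (hd : 1 ≤ d)
    (p0 τ0 Δτ p1 : ℝ) (hp0 : 0 < p0) (hΔτ : 0 < Δτ)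
    (hp1 : 1 / p1 = Δτ / (d : ℝ) + 1 / p0)
    (lam : GradedSeq d c) (hlam : besovNorm d c p0 τ0 lam < ⊤) :
    (besovNorm d c p1 (τ0 + Δτ) lam < ⊤ →
      ENNReal.ofReal (Δτ / (d : ℝ)) ≤ compressibility d c p0 τ0 lam) ∧
    (besovNorm d c p1 (τ0 + Δτ) lam = ⊤ →
      compressibility d c p0 τ0 lam ≤ ENNReal.ofReal (Δτ / (d : ℝ))) := by
  have hd₀ : (d : ℝ) ≠ 0 := Nat.cast_ne_zero.2 (by omega)
  have hρ : 0 ≤ Δτ / d := by positivity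
  have hp1₀ : 0 < p1 := one_div_pos.1 (by rw [hp1]; positivity)
  have hp : p1 ≤ p0 := (one_div_le_one_div hp0 hp1₀).1 (by rw [hp1]; linarith)
  have hΔ : Δτ / d = 1 / p1 - 1 / p0 := by rw [hp1]; ring
  have hτ : τ0 + Δτ - d / p1 = τ0 - d / p0 := by
    rw [div_eq_mul_one_div (d : ℝ) p1, hp1]
    field_simp
    ring
  set g := besovCoeff (τ0 - d / p0) lam
  have h₀ : ∑' i, g i ^ p0 ≠ ⊤ := by
    rwa [besovNorm_eq_tsum_besovCoeff hp0, rpow_lt_top_iff_of_pos (by positivity),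
      lt_top_iff_ne_top] at hlam
  have hnorm₁ : besovNorm d c p1 (τ0 + Δτ) lam = (∑' i, g i ^ p1) ^ (1 / p1) := by
    rw [besovNorm_eq_tsum_besovCoeff hp1₀, hτ]
  simp_rw [compressibility, nTermError_eq_bestNTermError hp0]
  refine ⟨fun h₁ => le_sSup ⟨_, ⟨hρ, ?_⟩, rfl⟩, fun h₁ => sSup_le ?_⟩
  · rw [hnorm₁, rpow_lt_top_iff_of_pos (by positivity), lt_top_iff_ne_top] at h₁
    exact hΔ ▸ iSup_rpow_mul_bestNTermError_lt_top hp1₀ hp h₀ h₁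
  · rintro _ ⟨r, ⟨hr₀, hr⟩, rfl⟩
    refine ENNReal.ofReal_le_ofReal (not_lt.1 fun hlt => ?_)
    rw [hnorm₁, rpow_eq_top_iff_of_pos (by positivity)] at h₁
    exact tsum_rpow_ne_top_of_iSup_rpow_mul_bestNTermError_ne_top hp0 hp1₀ hr₀ (hΔ ▸ hlt) h₀
      hr.ne h₁

theorem compressibility_bounds (d c : ℕ) (hd : 1 ≤ d) (hc : 1 ≤ c)
    (p0 τ0 Δτ p1 : ℝ) (hp0 : 0 < p0) (hΔτ : 0 < Δτ)
    (hp1 : 1 / p1 = Δτ / (d : ℝ) + 1 / p0)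
    (lam : GradedSeq d c) (hlam : besovNorm d c p0 τ0 lam < ⊤) :
    (besovNorm d c p1 (τ0 + Δτ) lam < ⊤ →
      ENNReal.ofReal (Δτ / (d : ℝ)) ≤ compressibility d c p0 τ0 lam) ∧
    (besovNorm d c p1 (τ0 + Δτ) lam = ⊤ →
      compressibility d c p0 τ0 lam ≤ ENNReal.ofReal (Δτ / (d : ℝ))) :=
  compressibility_bounds_general d c hd p0 τ0 Δτ p1 hp0 hΔτ hp1 lam hlam
end
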